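/- Let (α₁,α₂,α₃) ∈ ℂ³ be strongly non-resonant and let a, b, c ∈ R have no common non-unit divisor (every d ∈ R dividing a, b and c is a unit). Assume the tangency condition α₁x₁a + α₂x₂b + α₃x₃c = 0 and the integrability condition a(∂₂c − ∂₃b) + b(∂₃a − ∂₁c) + c(∂₁b − ∂₂a) = 0. Then a divides X(a), b divides X(b), and c divides X(c) in R. -/

import Mathlib

/-!
Put `f₁ = x₁a`, `f₂ = x₂b`, `f₃ = x₃c`. Differentiating the tangency relation and using
integrability gives `a X(b) − b X(a) = (α₁ − α₂) a b` and its analogues, i.e.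
`fᵢ X(fⱼ) = fⱼ X(fᵢ)`. The derivation `X` multiplies `x^m` by `m₁α₁ + m₂α₂ + m₃α₃`, which is
injective in `m` by non-resonance; comparing lexicographically least terms then forces every `fᵢ`
to be a constant multiple of one series `F`. Each `xᵢ` with `fᵢ ≠ 0` divides `F`, so
`F = x^n u` with `u` dividing `a`, `b` and `c`, hence a unit. A monomial times a unit divides its
image under `X`, and cancelling `xᵢ` gives the claim.
-/

open MvPowerSeries

/-- A triple `(α₁, α₂, α₃) ∈ ℂ³` is strongly non-resonant if the only integers
`ℓ₁, ℓ₂, ℓ₃ ∈ ℤ` with `ℓ₁α₁ + ℓ₂α₂ + ℓ₃α₃ = 0` are `ℓ₁ = ℓ₂ = ℓ₃ = 0`. -/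
def StronglyNonResonant (α₁ α₂ α₃ : ℂ) : Prop :=
  ∀ l₁ l₂ l₃ : ℤ, (l₁ : ℂ) * α₁ + (l₂ : ℂ) * α₂ + (l₃ : ℂ) * α₃ = 0 →
    l₁ = 0 ∧ l₂ = 0 ∧ l₃ = 0

/-- Formal partial derivative `∂ᵢ` on multivariate formal power series. -/
noncomputable def pd {n : ℕ} (i : Fin n) (f : MvPowerSeries (Fin n) ℂ) :
    MvPowerSeries (Fin n) ℂ :=
  fun m => ((m i : ℂ) + 1) * MvPowerSeries.coeff (R := ℂ) (m + Finsupp.single i 1) f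

/-- The derivation `X(f) = α₁x₁∂₁f + α₂x₂∂₂f + α₃x₃∂₃f` on `ℂ⟦x₁,x₂,x₃⟧`. -/
noncomputable def Xder (α₁ α₂ α₃ : ℂ) (f : MvPowerSeries (Fin 3) ℂ) :
    MvPowerSeries (Fin 3) ℂ :=
  C (σ := Fin 3) (R := ℂ) α₁ * X 0 * pd 0 f + C (σ := Fin 3) (R := ℂ) α₂ * X 1 * pd 1 f
    + C (σ := Fin 3) (R := ℂ) α₃ * X 2 * pd 2 f

open Finsupp Function

namespace MvPowerSeries

variable {σ R : Type*}

section CommSemiring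

variable [CommSemiring R]

theorem monomial_one_dvd_iff {n : σ →₀ ℕ} {φ : MvPowerSeries σ R} :
    monomial n (1 : R) ∣ φ ↔ ∀ m, ¬ n ≤ m → coeff m φ = 0 := by
  refine ⟨fun ⟨ψ, hψ⟩ m hm => by rw [hψ, coeff_monomial_mul, if_neg hm], fun h => ?_⟩
  let ψ : MvPowerSeries σ R := fun m => coeff (m + n) φ
  refine ⟨ψ, ext fun m => ?_⟩
  rw [coeff_monomial_mul]
  split_ifs with hnm
  · rw [one_mul]
    exact congrArg (coeff · φ) (tsub_add_cancel_of_le hnm).symm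
  · exact h m hnm

theorem coeff_X_mul_pderiv (i : σ) (f : MvPowerSeries σ R) (m : σ →₀ ℕ) :
    coeff m (X i * pderiv R i f) = m i * coeff m f := by
  rcases Nat.eq_zero_or_pos (m i) with hm | hm
  · rw [X_dvd_iff.1 (dvd_mul_right _ _) m hm, hm, Nat.cast_zero, zero_mul]
  · obtain ⟨m', rfl⟩ : ∃ m', m = single i 1 + m' := exists_add_of_le (single_le_iff.2 hm)
    rw [X_def, coeff_add_monomial_mul, one_mul, coeff_pderiv, add_comm m', Finsupp.add_apply,
      single_eq_same]
    push_cast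
    ring

/-- The Euler derivation `∑ᵢ wᵢ xᵢ ∂ᵢ`, defined coefficientwise: it scales `x^m` by
`weight w m`. -/
noncomputable def eulerDeriv (w : σ → R) :
    Derivation R (MvPowerSeries σ R) (MvPowerSeries σ R) where
  toFun f := show MvPowerSeries σ R from fun m => weight w m * coeff m f
  map_add' f g := by ext m; exact mul_add _ _ _
  map_smul' r f := by ext m; exact mul_left_comm _ _ _
  map_one_eq_zero' := by
    classical
    ext m
    change weight w m * coeff m 1 = 0
    by_cases hm : m = 0 <;> simp [coeff_one, hm]
  leibniz' f g := by
    classical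
    ext m
    change weight w m * coeff m (f * g) = _
    rw [smul_eq_mul, smul_eq_mul, mul_comm g, map_add, coeff_mul, coeff_mul, coeff_mul,
      Finset.mul_sum, ← Finset.sum_add_distrib]
    refine Finset.sum_congr rfl fun p hp => ?_
    change _ = _ * (weight w p.2 * _) + weight w p.1 * _ * _
    rw [← Finset.HasAntidiagonal.mem_antidiagonal.1 hp, map_add]
    ring

variable {w : σ → R}

theorem coeff_eulerDeriv (f : MvPowerSeries σ R) (m : σ →₀ ℕ) :
    coeff m (eulerDeriv w f) = weight w m * coeff m f := rfl

theorem eulerDeriv_monomial (n : σ →₀ ℕ) (r : R) :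
    eulerDeriv w (monomial n r) = weight w n • monomial n r := by
  classical
  ext m
  rw [coeff_eulerDeriv, coeff_smul, coeff_monomial]
  split_ifs with h
  · rw [h]
  · rw [mul_zero, mul_zero]

theorem eulerDeriv_X (i : σ) : eulerDeriv w (X i) = w i • X i := by
  rw [X_def, eulerDeriv_monomial, weight_single, one_smul]

theorem monomial_one_mul_dvd_eulerDeriv {u : MvPowerSeries σ R} (hu : IsUnit u) (n : σ →₀ ℕ) :
    monomial n 1 * u ∣ eulerDeriv w (monomial n 1 * u) := by
  rw [Derivation.leibniz, eulerDeriv_monomial, smul_eq_mul, smul_eq_mul, smul_eq_C_mul]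
  exact dvd_add (mul_dvd_mul_left _ hu.dvd) ⟨C (weight w n), by ring⟩

end CommSemiring

theorem X_ne_zero [Semiring R] [Nontrivial R] (i : σ) : (X i : MvPowerSeries σ R) ≠ 0 :=
  nonZeroDivisors.ne_zero X_mem_nonzeroDivisors

section CommRing

variable [CommRing R] {w : σ → R}

theorem mul_eulerDeriv_X_mul_eq_of_wronskian {i j : σ} {p q : MvPowerSeries σ R}
    (h : p * eulerDeriv w q - q * eulerDeriv w p = (w i - w j) • (p * q)) :
    X i * p * eulerDeriv w (X j * q) = X j * q * eulerDeriv w (X i * p) := by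
  rw [Derivation.leibniz, Derivation.leibniz, eulerDeriv_X, eulerDeriv_X]
  simp only [smul_eq_C_mul, smul_eq_mul, map_sub] at h ⊢
  linear_combination (X i * X j) * h

variable [IsDomain R]

theorem X_mul_dvd_eulerDeriv_iff {i : σ} {g : MvPowerSeries σ R} :
    X i * g ∣ eulerDeriv w (X i * g) ↔ g ∣ eulerDeriv w g := by
  rw [Derivation.leibniz, eulerDeriv_X, smul_eq_mul, smul_eq_mul, mul_smul_comm, mul_comm g,
    dvd_add_left (dvd_smul_of_dvd _ dvd_rfl)]
  exact mul_dvd_mul_iff_left (X_ne_zero i)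

end CommRing

section LexOrder

variable [LinearOrder σ] [WellFoundedGT σ]

theorem coeff_add_mul_of_le_lexOrder [Semiring R] {φ ψ : MvPowerSeries σ R} {p q : σ →₀ ℕ}
    (hp : toLex p ≤ lexOrder φ) (hq : toLex q ≤ lexOrder ψ) :
    coeff (p + q) (φ * ψ) = coeff p φ * coeff q ψ := by
  rw [coeff_mul, Finset.sum_eq_single_of_mem ⟨p, q⟩ (by simp)]
  rintro ⟨u, v⟩ huv hne
  rcases trichotomy_of_add_eq_add
      (congrArg toLex (Finset.HasAntidiagonal.mem_antidiagonal.1 huv)) with h | h | h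
  · exact absurd (Prod.ext h.1 h.2) hne
  · rw [coeff_eq_zero_of_lt_lexOrder (lt_of_lt_of_le (WithTop.coe_lt_coe.2 h) hp), zero_mul]
  · rw [coeff_eq_zero_of_lt_lexOrder (lt_of_lt_of_le (WithTop.coe_lt_coe.2 h) hq), mul_zero]

section CommRing

variable [CommRing R] [IsDomain R] {w : σ → R}

theorem lexOrder_eq_of_mul_eulerDeriv_eq (hw : Injective (weight w : (σ →₀ ℕ) → R))
    {f h : MvPowerSeries σ R} (hf : f ≠ 0) (hh : h ≠ 0)
    (hfh : f * eulerDeriv w h = h * eulerDeriv w f) : lexOrder h = lexOrder f := by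
  obtain ⟨p, hp⟩ := exists_finsupp_eq_lexOrder_of_ne_zero hf
  obtain ⟨q, hq⟩ := exists_finsupp_eq_lexOrder_of_ne_zero hh
  have hD : ∀ {φ : MvPowerSeries σ R} {d : σ →₀ ℕ}, lexOrder φ = toLex d →
      toLex d ≤ lexOrder (eulerDeriv w φ) := fun hd => le_lexOrder_iff.2 fun e he => by
    rw [coeff_eulerDeriv, coeff_eq_zero_of_lt_lexOrder (he.trans_le hd.ge), mul_zero]
  have hpq := congrArg (coeff (p + q)) hfh
  rw [coeff_add_mul_of_le_lexOrder hp.ge (hD hq), add_comm p q,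
    coeff_add_mul_of_le_lexOrder hq.ge (hD hp), coeff_eulerDeriv, coeff_eulerDeriv] at hpq
  have hne : coeff p f * coeff q h ≠ 0 :=
    mul_ne_zero (coeff_ne_zero_of_lexOrder hp.symm) (coeff_ne_zero_of_lexOrder hq.symm)
  have hw' : weight w q = weight w p :=
    sub_eq_zero.1 ((mul_eq_zero.1 (by linear_combination hpq)).resolve_right hne)
  rw [hp, hq, hw hw']

end CommRing

section Field

variable [Field R] {w : σ → R}

theorem exists_eq_smul_of_mul_eulerDeriv_eq (hw : Injective (weight w : (σ →₀ ℕ) → R))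
    {f h : MvPowerSeries σ R} (hf : f ≠ 0) (hfh : f * eulerDeriv w h = h * eulerDeriv w f) :
    ∃ κ : R, h = κ • f := by
  obtain ⟨p, hp⟩ := exists_finsupp_eq_lexOrder_of_ne_zero hf
  have hfp : coeff p f ≠ 0 := coeff_ne_zero_of_lexOrder hp.symm
  refine ⟨coeff p h / coeff p f, sub_eq_zero.1 (by_contra fun hne => ?_)⟩
  have hrel : f * eulerDeriv w (h - (coeff p h / coeff p f) • f)
      = (h - (coeff p h / coeff p f) • f) * eulerDeriv w f := by
    rw [map_sub, Derivation.map_smul, mul_sub, sub_mul, hfh, mul_smul_comm, smul_mul_assoc,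
      mul_comm f]
  refine coeff_ne_zero_of_lexOrder (lexOrder_eq_of_mul_eulerDeriv_eq hw hf hne hrel ▸ hp).symm ?_
  rw [map_sub, coeff_smul, div_mul_cancel₀ _ hfp, sub_self]

theorem exists_eq_smul_of_pairwise_mul_eulerDeriv_eq {ι : Type*}
    (hw : Injective (weight w : (σ →₀ ℕ) → R)) {f : ι → MvPowerSeries σ R}
    (hf : ∀ i j, f i * eulerDeriv w (f j) = f j * eulerDeriv w (f i)) :
    ∃ (F : MvPowerSeries σ R) (κ : ι → R), ∀ j, f j = κ j • F := by
  by_cases h : ∃ k, f k ≠ 0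
  · obtain ⟨k, hk⟩ := h
    choose κ hκ using fun j => exists_eq_smul_of_mul_eulerDeriv_eq hw hk (hf k j)
    exact ⟨f k, κ, hκ⟩
  · push Not at h
    exact ⟨0, 0, fun j => by rw [h j, smul_zero]⟩

end Field

end LexOrder

theorem exists_eq_monomial_one_mul_isUnit [Finite σ] [Field R] {F : MvPowerSeries σ R}
    {g : σ → MvPowerSeries σ R} {κ : σ → R} (hF : ∀ j, X j * g j = κ j • F)
    (hg : ∀ d, (∀ j, d ∣ g j) → IsUnit d) :
    ∃ (n : σ →₀ ℕ) (u : MvPowerSeries σ R), IsUnit u ∧ F = monomial n 1 * u := by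
  classical
  let n : σ →₀ ℕ := equivFunOnFinite.symm fun j => if κ j = 0 then 0 else 1
  have hn : ∀ j, κ j ≠ 0 → monomial n 1 = X j * monomial (n - single j 1) (1 : R) := by
    intro j hj
    rw [X_def, monomial_mul_monomial, one_mul,
      add_tsub_cancel_of_le (single_le_iff.2 (by simp [n, hj]))]
  obtain ⟨u, hu⟩ : monomial n 1 ∣ F := monomial_one_dvd_iff.2 fun m hm => by
    obtain ⟨j, hj⟩ : ∃ j, m j < n j := by simpa [Finsupp.le_def] using hm
    have hκ : κ j ≠ 0 := fun h => by simp [n, h] at hj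
    have hXF : X j ∣ F := ⟨(κ j)⁻¹ • g j, by rw [mul_smul_comm, hF j, inv_smul_smul₀ hκ]⟩
    exact X_dvd_iff.1 hXF m (by simp [n, hκ] at hj; omega)
  refine ⟨n, u, hg u fun j => ?_, hu⟩
  by_cases hκ : κ j = 0
  · rw [(mul_eq_zero.1 ((hF j).trans (by rw [hκ, zero_smul]))).resolve_left (X_ne_zero j)]
    exact dvd_zero u
  · refine Dvd.intro_left (κ j • monomial (n - single j 1) 1) (mul_left_cancel₀ (X_ne_zero j) ?_)
    rw [hF j, hu, hn j hκ]
    simp only [smul_mul_assoc, mul_smul_comm, mul_assoc]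

end MvPowerSeries

theorem StronglyNonResonant.injective_weight {α₁ α₂ α₃ : ℂ}
    (h : StronglyNonResonant α₁ α₂ α₃) :
    Injective (weight ![α₁, α₂, α₃] : (Fin 3 →₀ ℕ) → ℂ) := by
  intro m n hmn
  simp only [weight_eq_sum, Fin.sum_univ_three, nsmul_eq_mul, Matrix.cons_val_zero,
    Matrix.cons_val_one, Matrix.cons_val_two, Matrix.tail_cons, Matrix.head_cons] at hmn
  obtain ⟨h0, h1, h2⟩ :=
    h (m 0 - n 0) (m 1 - n 1) (m 2 - n 2) (by push_cast; linear_combination hmn)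
  ext i
  fin_cases i <;> simp <;> omega

theorem pd_eq_pderiv {n : ℕ} (i : Fin n) (f : MvPowerSeries (Fin n) ℂ) :
    pd i f = pderiv ℂ i f := by
  ext m
  rw [coeff_pderiv, mul_comm]
  rfl

theorem Xder_eq_eulerDeriv (α₁ α₂ α₃ : ℂ) (f : MvPowerSeries (Fin 3) ℂ) :
    Xder α₁ α₂ α₃ f = eulerDeriv ![α₁, α₂, α₃] f := by
  ext m
  simp only [Xder, pd_eq_pderiv, map_add, mul_assoc, coeff_C_mul, coeff_X_mul_pderiv,
    coeff_eulerDeriv, weight_eq_sum, Fin.sum_univ_three, nsmul_eq_mul, Matrix.cons_val_zero,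
    Matrix.cons_val_one, Matrix.cons_val_two, Matrix.tail_cons, Matrix.head_cons]
  ring

theorem wronskian_eq_of_tangent_of_integrable {α₁ α₂ α₃ : ℂ} {a b c : MvPowerSeries (Fin 3) ℂ}
    (htan : C (σ := Fin 3) (R := ℂ) α₁ * X 0 * a + C (σ := Fin 3) (R := ℂ) α₂ * X 1 * b
        + C (σ := Fin 3) (R := ℂ) α₃ * X 2 * c = 0)
    (hint : a * (pd 1 c - pd 2 b) + b * (pd 2 a - pd 0 c) + c * (pd 0 b - pd 1 a) = 0)
    (i j : Fin 3) :
    ![a, b, c] i * eulerDeriv ![α₁, α₂, α₃] (![a, b, c] j)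
        - ![a, b, c] j * eulerDeriv ![α₁, α₂, α₃] (![a, b, c] i)
      = (![α₁, α₂, α₃] i - ![α₁, α₂, α₃] j) • (![a, b, c] i * ![a, b, c] j) := by
  have hdiff : ∀ k : Fin 3, pderiv ℂ k (C α₁ * X 0 * a + C α₂ * X 1 * b + C α₃ * X 2 * c) = 0 :=
    fun k => by rw [htan, map_zero]
  have e0 := hdiff 0
  have e1 := hdiff 1
  have e2 := hdiff 2
  simp only [map_add, Derivation.leibniz, pderiv_C, pderiv_X, Pi.single_apply, smul_eq_mul,
    Fin.reduceEq, if_true, if_false] at e0 e1 e2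
  simp only [← Xder_eq_eulerDeriv, Xder, pd_eq_pderiv] at hint ⊢
  set d := fun k : Fin 3 => pderiv ℂ k
  fin_cases i <;> fin_cases j <;>
    simp only [Fin.zero_eta, Fin.mk_one, Fin.reduceFinMk, Matrix.cons_val_zero,
      Matrix.cons_val_one, Matrix.cons_val, sub_self, zero_smul, smul_eq_C_mul, map_sub]
  -- `gᵢ ∂ⱼ(tangency) − gⱼ ∂ᵢ(tangency)`, corrected by `αₖ xₖ` times the integrability relation
  -- (`k ∉ {i, j}`) and a multiple of the tangency relation
  · linear_combination (-b) * e0 + a * e1 - C α₃ * X 2 * hint + (d 0 b - d 1 a) * htan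
  · linear_combination (-c) * e0 + a * e2 + C α₂ * X 1 * hint + (d 0 c - d 2 a) * htan
  · linear_combination b * e0 - a * e1 + C α₃ * X 2 * hint - (d 0 b - d 1 a) * htan
  · linear_combination (-c) * e1 + b * e2 - C α₁ * X 0 * hint + (d 1 c - d 2 b) * htan
  · linear_combination c * e0 - a * e2 - C α₂ * X 1 * hint - (d 0 c - d 2 a) * htan
  · linear_combination c * e1 - b * e2 + C α₁ * X 0 * hint - (d 1 c - d 2 b) * htan

theorem coefficients_divide_their_derivatives (α₁ α₂ α₃ : ℂ)
    (hres : StronglyNonResonant α₁ α₂ α₃)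
    (a b c : MvPowerSeries (Fin 3) ℂ)
    (hcop : ∀ d : MvPowerSeries (Fin 3) ℂ, d ∣ a → d ∣ b → d ∣ c → IsUnit d)
    (htan : C (σ := Fin 3) (R := ℂ) α₁ * X 0 * a + C (σ := Fin 3) (R := ℂ) α₂ * X 1 * b
        + C (σ := Fin 3) (R := ℂ) α₃ * X 2 * c = 0)
    (hint : a * (pd 1 c - pd 2 b) + b * (pd 2 a - pd 0 c)
        + c * (pd 0 b - pd 1 a) = 0) :
    a ∣ Xder α₁ α₂ α₃ a ∧ b ∣ Xder α₁ α₂ α₃ b ∧ c ∣ Xder α₁ α₂ α₃ c := by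
  obtain ⟨F, κ, hF⟩ := exists_eq_smul_of_pairwise_mul_eulerDeriv_eq hres.injective_weight
    fun i j => mul_eulerDeriv_X_mul_eq_of_wronskian
      (wronskian_eq_of_tangent_of_integrable htan hint i j)
  obtain ⟨n, u, hu, rfl⟩ :=
    exists_eq_monomial_one_mul_isUnit hF fun d hd => hcop d (hd 0) (hd 1) (hd 2)
  have hdvd : ∀ j, ![a, b, c] j ∣ eulerDeriv ![α₁, α₂, α₃] (![a, b, c] j) := fun j =>
    X_mul_dvd_eulerDeriv_iff.1 <| by
      rw [hF j, Derivation.map_smul]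
      exact smul_dvd_smul dvd_rfl (monomial_one_mul_dvd_eulerDeriv hu n)
  simp only [Xder_eq_eulerDeriv]
  exact ⟨hdvd 0, hdvd 1, hdvd 2⟩
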